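/- arXiv:math/9912111 — 9 statements merged into one kernel-verified Lean document; each statement's English description precedes it below -/
import Mathlib

section
/- For every positive integer n, the set P_n := {α ∈ ℚ : 0 ≤ α ≤ 1 and ⌊(n+1)α⌋ ≥ nα} is equal to {0} ∪ ⋃_{k=1}^{n} {α ∈ ℚ : k/(n+1) ≤ α ≤ k/n}. -/
/-- Shokurov's set `P n` of admissible boundary coefficients. -/
def Pn (n : ℕ) : Set ℚ :=
  {α : ℚ | 0 ≤ α ∧ α ≤ 1 ∧ (n : ℚ) * α ≤ (⌊((n : ℚ) + 1) * α⌋ : ℚ)}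

/-- Decomposition of `P n` as `{0} ∪ ⋃_{k=1}^{n} [k/(n+1), k/n]`. -/
theorem Pn_eq_union (n : ℕ) (hn : 0 < n) :
    Pn n = {0} ∪ ⋃ k ∈ Finset.Icc 1 n,
      {α : ℚ | (k : ℚ) / ((n : ℚ) + 1) ≤ α ∧ α ≤ (k : ℚ) / (n : ℚ)} := by
  have hn' : (0:ℚ) < n := by exact_mod_cast hn
  have hn1 : (0:ℚ) < (n:ℚ) + 1 := by linarith
  ext α
  simp only [Pn, Set.mem_setOf_eq, Set.mem_union, Set.mem_singleton_iff, Set.mem_iUnion,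
    Finset.mem_Icc, exists_prop]
  constructor
  · rintro ⟨h0, h1, hf⟩
    rcases eq_or_lt_of_le h0 with h | hpos
    · exact Or.inl h.symm
    right
    rcases eq_or_lt_of_le h1 with h1' | hlt
    · subst h1'
      refine ⟨n, ⟨hn, le_rfl⟩, ?_, ?_⟩
      · rw [div_le_one hn1]; linarith
      · rw [div_self hn'.ne']
    set k := ⌊((n:ℚ)+1)*α⌋ with hk
    have hfl : (k:ℚ) ≤ ((n:ℚ)+1)*α := Int.floor_le _
    have hk1 : 1 ≤ k := by
      have : (0:ℚ) < (n:ℚ) * α := by positivity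
      have : (0:ℚ) < (k:ℚ) := lt_of_lt_of_le this hf
      exact_mod_cast this
    have hkn : k ≤ n := by
      have : ((n:ℚ)+1)*α < (n:ℚ)+1 := by nlinarith
      have : (k:ℚ) < (n:ℚ)+1 := lt_of_le_of_lt hfl this
      have : (k:ℚ) < (n:ℚ)+1 := this
      exact_mod_cast Int.lt_add_one_iff.mp (by exact_mod_cast this)
    refine ⟨k.toNat, ⟨?_, ?_⟩, ?_, ?_⟩
    · omega
    · omega
    · rw [div_le_iff₀ hn1]
      have : ((k.toNat : ℤ) : ℚ) = (k:ℚ) := by norm_cast; omega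
      push_cast at this ⊢
      rw [this]; linarith
    · rw [le_div_iff₀ hn']
      have : ((k.toNat : ℤ) : ℚ) = (k:ℚ) := by norm_cast; omega
      push_cast at this ⊢
      rw [this]; linarith
  · rintro (rfl | ⟨k, ⟨hk1, hkn⟩, hlo, hhi⟩)
    · refine ⟨le_rfl, by norm_num, ?_⟩
      simp
    · have hk1' : (1:ℚ) ≤ (k:ℚ) := by exact_mod_cast hk1
      have hkn' : (k:ℚ) ≤ (n:ℚ) := by exact_mod_cast hkn
      have h0 : 0 ≤ α := le_trans (by positivity) hlo
      have h1 : α ≤ 1 := le_trans hhi (by rw [div_le_one hn']; exact hkn')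
      refine ⟨h0, h1, ?_⟩
      have hna : (n:ℚ) * α ≤ (k:ℚ) := by rw [le_div_iff₀ hn'] at hhi; linarith
      have hfl : (k:ℤ) ≤ ⌊((n:ℚ)+1)*α⌋ := by
        apply Int.le_floor.mpr
        rw [div_le_iff₀ hn1] at hlo
        push_cast
        linarith
      have : (k:ℚ) ≤ (⌊((n:ℚ)+1)*α⌋ : ℚ) := by exact_mod_cast hfl
      linarith
end

section
/- Let M_sm := {1 - 1/m : m a positive integer} ∪ {1} ⊆ ℚ, and for each positive integer n let P_n := {α ∈ ℚ : 0 ≤ α ≤ 1 and ⌊(n+1)α⌋ ≥ nα}. Then M_sm = ⋂_{n ≥ 1} P_n. -/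
/-- The set of standard coefficients `{1 - 1/m} ∪ {1}`. -/
def Msm : Set ℚ := {α : ℚ | ∃ m : ℕ, 0 < m ∧ α = 1 - 1 / (m : ℚ)} ∪ {1}

/-- The standard coefficients are exactly the rationals lying in `P n` for all `n ≥ 1`. -/
theorem Msm_eq_iInter_Pn : Msm = ⋂ n ∈ {n : ℕ | 0 < n}, Pn n := by
  ext α
  simp only [Msm, Pn, Set.mem_iInter, Set.mem_setOf_eq, Set.mem_union, Set.mem_singleton_iff]
  constructor
  · rintro (⟨m, hm, rfl⟩ | rfl)
    · intro n hn
      have hm' : (0:ℚ) < m := by exact_mod_cast hm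
      have h1 : (1:ℚ)/m ≤ 1 := by
        rw [div_le_one hm']; exact_mod_cast hm
      have h1pos : (0:ℚ) < 1/m := one_div_pos.mpr hm'
      refine ⟨by linarith, by linarith, ?_⟩
      set k : ℤ := ⌈((n:ℚ)+1)/m⌉ with hk
      have hfloor : ⌊((n:ℚ)+1) * (1 - 1/m)⌋ = (n+1 : ℤ) - k := by
        have he : ((n:ℚ)+1) * (1 - 1/m) = -(((n:ℚ)+1)/m) + ((n:ℤ)+1 : ℤ) := by
          push_cast; field_simp; ring
        rw [he, Int.floor_add_intCast, Int.floor_neg]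
        push_cast
        ring
      have hkb : (k:ℚ) ≤ 1 + n/m := by
        have h2 : (k:ℚ) - 1 < ((n:ℚ)+1)/m := by
          have := Int.ceil_lt_add_one (((n:ℚ)+1)/m)
          linarith
        have h3 : (m:ℚ) * ((k:ℚ) - 1) < (n:ℚ) + 1 := by
          rw [← lt_div_iff₀' hm']
          exact h2
        have h4 : (m:ℤ) * (k - 1) < (n:ℤ) + 1 := by exact_mod_cast h3
        have h5 : (m:ℤ) * k ≤ (n:ℤ) + m := by nlinarith
        have h6 : (m:ℚ) * k ≤ (n:ℚ) + m := by exact_mod_cast h5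
        rw [← le_div_iff₀' hm'] at h6
        calc (k:ℚ) ≤ ((n:ℚ)+m)/m := h6
          _ = 1 + n/m := by field_simp; ring
      rw [hfloor]
      have he2 : (n:ℚ) * (1 - 1/m) = n - n/m := by ring
      push_cast
      linarith
    · intro n hn
      refine ⟨zero_le_one, le_refl 1, ?_⟩
      have he : ((n:ℚ)+1) * 1 = (((n:ℤ)+1 : ℤ) : ℚ) := by push_cast; ring
      rw [he, Int.floor_intCast]
      push_cast
      linarith
  · intro h
    obtain ⟨h0, h1le, -⟩ := h 1 one_pos
    by_cases hα1 : α = 1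
    · right; exact hα1
    left
    have hlt : α < 1 := lt_of_le_of_ne h1le hα1
    set q := α.den with hq
    set a := α.num.toNat with ha
    have hqpos : 0 < q := α.pos
    have hanum : α.num = (a : ℤ) := (Int.toNat_of_nonneg (Rat.num_nonneg.mpr h0)).symm
    have hαeq : α = (a : ℚ) / q := by
      conv_lhs => rw [← Rat.num_div_den α]
      rw [hanum]
      push_cast
      rfl
    have hqQ : (0:ℚ) < (q:ℚ) := by exact_mod_cast hqpos
    have halt : a < q := by
      by_contra hge
      push_neg at hge
      have : (1:ℚ) ≤ (a:ℚ)/q := by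
        rw [le_div_iff₀ hqQ, one_mul]
        exact_mod_cast hge
      rw [hαeq] at hlt
      linarith
    have hcop : Nat.Coprime a q := by
      have := α.reduced
      rwa [hanum, Int.natAbs_natCast] at this
    refine ⟨q, hqpos, ?_⟩
    have key : a + 1 = q := by
      by_contra hne
      have halt2 : a + 1 < q := lt_of_le_of_ne halt hne
      have hq2 : 2 ≤ q := by omega
      haveI : NeZero q := ⟨by omega⟩
      set N : ℕ := q + (((q-1 : ℕ) : ZMod q) * ((a : ZMod q))⁻¹).val with hN
      have hNmod : ((N : ZMod q)) = ((q-1 : ℕ) : ZMod q) * ((a : ZMod q))⁻¹ := by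
        rw [hN]
        push_cast
        simp [ZMod.natCast_self, ZMod.natCast_val, ZMod.cast_id]
      have hNa : ((N * a : ℕ) : ZMod q) = ((q - 1 : ℕ) : ZMod q) := by
        push_cast
        rw [hNmod, mul_assoc, mul_comm ((a : ZMod q))⁻¹ (a : ZMod q),
          ZMod.coe_mul_inv_eq_one a hcop, mul_one]
      have hmodeq : (N * a) % q = q - 1 := by
        have h1 : N * a ≡ q - 1 [MOD q] := (ZMod.natCast_eq_natCast_iff _ _ _).mp hNa
        unfold Nat.ModEq at h1
        rw [Nat.mod_eq_of_lt (Nat.sub_lt hqpos one_pos)] at h1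
        exact h1
      set t : ℕ := (N * a) / q with ht
      have hdiv : N * a = q * t + (q - 1) := by
        rw [ht, ← hmodeq]
        exact (Nat.div_add_mod (N*a) q).symm
      have hn2 : 2 ≤ N := by
        have : q ≤ N := Nat.le_add_right _ _
        omega
      set n : ℕ := N - 1 with hn
      have hnpos : 0 < n := by omega
      obtain ⟨-, -, hfl⟩ := h n hnpos
      have hNn : ((n:ℚ) + 1) = (N:ℚ) := by
        have : n + 1 = N := by omega
        exact_mod_cast this
      have hdivQ : (N:ℚ) * a = q * t + ((q:ℚ) - 1) := by
        have hc : ((N*a : ℕ) : ℚ) = ((q * t + (q-1) : ℕ) : ℚ) := congrArg (Nat.cast : ℕ → ℚ) hdiv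
        push_cast [Nat.cast_sub (by omega : 1 ≤ q)] at hc
        linarith
      have hNα : ((N:ℚ)) * α = (t:ℚ) + ((q:ℚ)-1)/q := by
        rw [hαeq, mul_div_assoc']
        rw [div_eq_iff (ne_of_gt hqQ)]
        field_simp
        linarith [hdivQ]
      have hfloorN : ⌊((n:ℚ)+1) * α⌋ = (t : ℤ) := by
        rw [hNn, hNα]
        rw [show ((t:ℚ) + ((q:ℚ)-1)/q) = ((q:ℚ)-1)/q + ((t:ℤ):ℚ) by push_cast; ring]
        rw [Int.floor_add_intCast]
        have h0' : ⌊((q:ℚ)-1)/q⌋ = 0 := by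
          rw [Int.floor_eq_zero_iff]
          have hq1 : (1:ℚ) ≤ q := by exact_mod_cast hqpos
          constructor
          · apply div_nonneg <;> linarith
          · rw [div_lt_one hqQ]; linarith
        rw [h0']
        simp
      rw [hfloorN] at hfl
      have hnα : (n:ℚ) * α = (N:ℚ) * α - α := by
        have : (n:ℚ) = (N:ℚ) - 1 := by linarith [hNn]
        rw [this]; ring
      rw [hnα, hNα, hαeq] at hfl
      -- hfl : t + (q-1)/q - a/q ≤ t
      have : ((q:ℚ)-1)/q ≤ (a:ℚ)/q := by push_cast at hfl ⊢; linarith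
      rw [div_le_div_iff₀ hqQ hqQ] at this
      have : (q:ℚ) - 1 ≤ a := by nlinarith
      have : (q:ℤ) - 1 ≤ (a:ℤ) := by exact_mod_cast this
      omega
    rw [hαeq, ← key]
    have hpos : ((a:ℚ) + 1) ≠ 0 := by positivity
    push_cast
    field_simp
    ring
end

section
/- Fix a positive integer n and let P_n := {α ∈ ℚ : 0 ≤ α ≤ 1 and ⌊(n+1)α⌋ ≥ nα}. Let m be a positive integer, let k₁,…,k_r be nonnegative integers and b₁,…,b_r ∈ P_n, and set α := (m-1)/m + (1/m)·∑_{j=1}^{r} k_j·b_j. If α ≤ 1, then α ∈ P_n. -/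
/-- The class `P n` is preserved by coefficients of the different: if `b_j ∈ P n`
and `α = (m-1)/m + (1/m)·∑ k_j·b_j ≤ 1`, then `α ∈ P n`. -/
theorem different_coeff_mem_Pn (n : ℕ) (hn : 0 < n) (m : ℕ) (hm : 0 < m)
    (r : ℕ) (k : Fin r → ℕ) (b : Fin r → ℚ) (hb : ∀ j, b j ∈ Pn n) (α : ℚ)
    (hα : α = ((m : ℚ) - 1) / (m : ℚ) + (1 / (m : ℚ)) * ∑ j, (k j : ℚ) * b j)
    (hle : α ≤ 1) :
    α ∈ Pn n := by
  have hm' : (0:ℚ) < (m:ℚ) := by exact_mod_cast hm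
  set N : ℚ := (n:ℚ) with hN
  set M : ℚ := (m:ℚ) with hM
  set S : ℚ := ∑ j, (k j : ℚ) * b j with hSdef
  have hS : (0:ℚ) ≤ S :=
    Finset.sum_nonneg fun j _ => mul_nonneg (Nat.cast_nonneg _) (hb j).1
  have hm1 : (1:ℚ) ≤ M := by rw [hM]; exact_mod_cast hm
  have hmα : M * α = (M - 1) + S := by
    rw [hα]; field_simp
  refine ⟨?_, hle, ?_⟩
  · rw [hα]
    have h1 : (0:ℚ) ≤ (M - 1) / M := div_nonneg (by linarith) hm'.le
    have h2 : (0:ℚ) ≤ (1 / M) * S := mul_nonneg (by positivity) hS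
    linarith
  · set F : Fin r → ℤ := fun j => ⌊(N + 1) * b j⌋ with hF
    set A : ℤ := ((n:ℤ)+1) * ((m:ℤ)-1) + ∑ j, (k j : ℤ) * F j with hA
    set T : ℚ := ∑ j, (k j : ℚ) * (F j : ℚ) with hT
    have hAQ : (A:ℚ) = (N + 1) * (M - 1) + T := by
      rw [hA, hT, hN, hM]; push_cast; ring
    have hT1 : T ≤ (N + 1) * S := by
      rw [hT, hSdef, Finset.mul_sum]
      apply Finset.sum_le_sum
      intro j _
      have he : (N+1) * ((k j : ℚ) * b j) = (k j : ℚ) * ((N+1) * b j) := by ring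
      rw [he]
      exact mul_le_mul_of_nonneg_left (Int.floor_le _) (Nat.cast_nonneg _)
    have hT2 : N * S ≤ T := by
      rw [hT, hSdef, Finset.mul_sum]
      apply Finset.sum_le_sum
      intro j _
      have he : N * ((k j : ℚ) * b j) = (k j : ℚ) * (N * b j) := by ring
      rw [he]
      exact mul_le_mul_of_nonneg_left (hb j).2.2 (Nat.cast_nonneg _)
    have e1 : M * ((N + 1) * α) = (N + 1) * (M - 1) + (N + 1) * S := by
      linear_combination (N + 1) * hmα
    have e2 : M * (N * α) = N * (M - 1) + N * S := by
      linear_combination N * hmα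
    have hup : (A:ℚ) ≤ M * ((N + 1) * α) := by rw [hAQ, e1]; linarith
    have hlow : M * (N * α) + (M - 1) ≤ (A:ℚ) := by rw [hAQ]; linarith
    have hq1 : (A:ℚ) / M ≤ (N + 1) * α := (div_le_iff₀' hm').mpr hup
    set q : ℤ := ⌊(A:ℚ)/M⌋ with hqdef
    have hfl1 : q ≤ ⌊(N+1)*α⌋ := Int.floor_mono hq1
    have hfl2 : (A:ℚ)/M - 1 < ((q:ℤ) : ℚ) := Int.sub_one_lt_floor _
    have hz : A - (m:ℤ) < (m:ℤ) * q := by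
      have h3 : (A:ℚ) - M < M * ((q:ℤ) : ℚ) := by
        have h4 := mul_lt_mul_of_pos_left hfl2 hm'
        rw [mul_sub, mul_one, mul_div_cancel₀ _ hm'.ne'] at h4
        exact h4
      rw [hM] at h3
      exact_mod_cast h3
    have hz2 : A - ((m:ℤ) - 1) ≤ (m:ℤ) * q := by omega
    have hz3 : (A:ℚ) - (M - 1) ≤ M * ((q:ℤ) : ℚ) := by rw [hM]; exact_mod_cast hz2
    have hcast : ((q:ℤ) : ℚ) ≤ (⌊(N+1)*α⌋ : ℚ) := by exact_mod_cast hfl1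
    have final : M * (N * α) ≤ M * (⌊(N+1)*α⌋ : ℚ) := by nlinarith
    exact le_of_mul_le_mul_left final hm'
end

section
/- Let M_sm := {1 - 1/m : m a positive integer} ∪ {1} ⊆ ℚ, let M_m := M_sm ∪ {α ∈ ℚ : 6/7 ≤ α ≤ 1}, and for each positive integer n let P_n := {α ∈ ℚ : 0 ≤ α ≤ 1 and ⌊(n+1)α⌋ ≥ nα}. Then M_m ⊆ P₁ ∪ P₂ ∪ P₃ ∪ P₄ ∪ P₆. -/
/-- Shokurov's extended coefficient set `M_m = M_sm ∪ [6/7, 1]`. -/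
def Mm : Set ℚ := Msm ∪ {α : ℚ | 6 / 7 ≤ α ∧ α ≤ 1}

lemma mem_Pn_one_of_half_le {α : ℚ} (h1 : 1/2 ≤ α) (h2 : α ≤ 1) : α ∈ Pn 1 := by
  have hfl : (1 : ℤ) ≤ ⌊((1 : ℚ) + 1) * α⌋ := by
    rw [Int.le_floor]; push_cast; linarith
  refine ⟨by linarith, h2, ?_⟩
  have : (1 : ℚ) ≤ (⌊((1 : ℚ) + 1) * α⌋ : ℚ) := by exact_mod_cast hfl
  push_cast
  linarith

/-- `M_m ⊆ P₁ ∪ P₂ ∪ P₃ ∪ P₄ ∪ P₆`. -/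
theorem Mm_subset_union_Pn : Mm ⊆ Pn 1 ∪ Pn 2 ∪ Pn 3 ∪ Pn 4 ∪ Pn 6 := by
  intro α hα
  have hP1 : α ∈ Pn 1 := by
    rcases hα with (⟨m, hm, rfl⟩ | rfl) | ⟨h1, h2⟩
    · rcases Nat.lt_or_ge m 2 with hm2 | hm2
      · interval_cases m
        · refine ⟨by norm_num, by norm_num, by norm_num⟩
      · have hm2' : (2 : ℚ) ≤ (m : ℚ) := by exact_mod_cast hm2
        have hmpos : (0 : ℚ) < (m : ℚ) := by positivity
        have h1m : 1 / (m : ℚ) ≤ 1/2 := by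
          rw [div_le_div_iff₀ hmpos (by norm_num)]; linarith
        have h1m' : 0 < 1 / (m : ℚ) := by positivity
        exact mem_Pn_one_of_half_le (by linarith) (by linarith)
    · exact mem_Pn_one_of_half_le (by norm_num) le_rfl
    · exact mem_Pn_one_of_half_le (by linarith) h2
  exact Or.inl (Or.inl (Or.inl (Or.inl hP1)))
end

section
/- Let d₁,…,d_r be rational numbers with 0 ≤ d_i ≤ 1 for all i and ∑_{i=1}^{r} d_i ≤ 2. Then there exists n ∈ {1, 2, 3, 4, 6} such that (∑_{i : d_i = 1} n) + (∑_{i : d_i < 1} ⌊(n+1)·d_i⌋) ≤ 2n. -/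
private lemma floorid2 (x : ℚ) (h0 : 0 ≤ x) (h1 : x < 1) :
    ⌊(2:ℚ) * x⌋ = (if 1/2 ≤ x then (1:ℤ) else 0) := by
  split_ifs <;>
    refine Int.floor_eq_iff.mpr ⟨by push_cast; linarith, by push_cast; linarith⟩

private lemma floorid3 (x : ℚ) (h0 : 0 ≤ x) (h1 : x < 1) :
    ⌊(3:ℚ) * x⌋ = (if 1/3 ≤ x then (1:ℤ) else 0) + (if 2/3 ≤ x then (1:ℤ) else 0) := by
  split_ifs <;>
    first
      | (exfalso; linarith)
      | refine Int.floor_eq_iff.mpr ⟨by push_cast; linarith, by push_cast; linarith⟩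

private lemma floorid4 (x : ℚ) (h0 : 0 ≤ x) (h1 : x < 1) :
    ⌊(4:ℚ) * x⌋ = (if 1/4 ≤ x then (1:ℤ) else 0) + (if 1/2 ≤ x then (1:ℤ) else 0)
      + (if 3/4 ≤ x then (1:ℤ) else 0) := by
  split_ifs <;>
    first
      | (exfalso; linarith)
      | refine Int.floor_eq_iff.mpr ⟨by push_cast; linarith, by push_cast; linarith⟩

private lemma floorid5 (x : ℚ) (h0 : 0 ≤ x) (h1 : x < 1) :
    ⌊(5:ℚ) * x⌋ = (if 1/5 ≤ x then (1:ℤ) else 0) + (if 2/5 ≤ x then (1:ℤ) else 0)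
      + (if 3/5 ≤ x then (1:ℤ) else 0) + (if 4/5 ≤ x then (1:ℤ) else 0) := by
  split_ifs <;>
    first
      | (exfalso; linarith)
      | refine Int.floor_eq_iff.mpr ⟨by push_cast; linarith, by push_cast; linarith⟩

private lemma floorid7 (x : ℚ) (h0 : 0 ≤ x) (h1 : x < 1) :
    ⌊(7:ℚ) * x⌋ = (if 1/7 ≤ x then (1:ℤ) else 0) + (if 2/7 ≤ x then (1:ℤ) else 0)
      + (if 3/7 ≤ x then (1:ℤ) else 0) + (if 4/7 ≤ x then (1:ℤ) else 0)
      + (if 5/7 ≤ x then (1:ℤ) else 0) + (if 6/7 ≤ x then (1:ℤ) else 0) := by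
  split_ifs <;>
    first
      | (exfalso; linarith)
      | refine Int.floor_eq_iff.mpr ⟨by push_cast; linarith, by push_cast; linarith⟩

private lemma stepmin (a b x : ℚ) (hab : a ≤ b) :
    (b - a) * (if b ≤ x then (1:ℚ) else 0) ≤ min x b - min x a := by
  rcases le_or_gt b x with h | h
  · rw [if_pos h, min_eq_right h, min_eq_right (hab.trans h), mul_one]
  · rw [if_neg (not_le.mpr h), mul_zero]
    have := min_le_min (le_refl x) hab
    linarith

private lemma layercake (x : ℚ) (hx : 0 ≤ x) :
    1/7 * (if 1/7 ≤ x then (1:ℚ) else 0) + 2/35 * (if 1/5 ≤ x then (1:ℚ) else 0)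
    + 1/20 * (if 1/4 ≤ x then (1:ℚ) else 0) + 1/28 * (if 2/7 ≤ x then (1:ℚ) else 0)
    + 1/21 * (if 1/3 ≤ x then (1:ℚ) else 0) + 1/15 * (if 2/5 ≤ x then (1:ℚ) else 0)
    + 1/35 * (if 3/7 ≤ x then (1:ℚ) else 0) + 1/14 * (if 1/2 ≤ x then (1:ℚ) else 0)
    + 1/14 * (if 4/7 ≤ x then (1:ℚ) else 0) + 1/35 * (if 3/5 ≤ x then (1:ℚ) else 0)
    + 1/15 * (if 2/3 ≤ x then (1:ℚ) else 0) + 1/21 * (if 5/7 ≤ x then (1:ℚ) else 0)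
    + 1/28 * (if 3/4 ≤ x then (1:ℚ) else 0) + 1/20 * (if 4/5 ≤ x then (1:ℚ) else 0)
    + 2/35 * (if 6/7 ≤ x then (1:ℚ) else 0) ≤ x := by
  have h1 := stepmin 0 (1/7) x (by norm_num)
  have h2 := stepmin (1/7) (1/5) x (by norm_num)
  have h3 := stepmin (1/5) (1/4) x (by norm_num)
  have h4 := stepmin (1/4) (2/7) x (by norm_num)
  have h5 := stepmin (2/7) (1/3) x (by norm_num)
  have h6 := stepmin (1/3) (2/5) x (by norm_num)
  have h7 := stepmin (2/5) (3/7) x (by norm_num)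
  have h8 := stepmin (3/7) (1/2) x (by norm_num)
  have h9 := stepmin (1/2) (4/7) x (by norm_num)
  have h10 := stepmin (4/7) (3/5) x (by norm_num)
  have h11 := stepmin (3/5) (2/3) x (by norm_num)
  have h12 := stepmin (2/3) (5/7) x (by norm_num)
  have h13 := stepmin (5/7) (3/4) x (by norm_num)
  have h14 := stepmin (3/4) (4/5) x (by norm_num)
  have h15 := stepmin (4/5) (6/7) x (by norm_num)
  have hmin : min x (6/7) ≤ x := min_le_left _ _
  have hmin0 : min x 0 = 0 := min_eq_right hx
  linarith

/-- Existence of regular complements on `ℙ¹`: for rational `0 ≤ d_i ≤ 1` with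
`∑ d_i ≤ 2`, there is `n ∈ {1,2,3,4,6}` with
`∑_{d_i = 1} n + ∑_{d_i < 1} ⌊(n+1)d_i⌋ ≤ 2n`. -/
theorem exists_regular_complement_P1 (r : ℕ) (d : Fin r → ℚ)
    (h0 : ∀ i, 0 ≤ d i) (h1 : ∀ i, d i ≤ 1) (hsum : ∑ i, d i ≤ 2) :
    ∃ n ∈ ({1, 2, 3, 4, 6} : Set ℕ),
      (∑ i ∈ Finset.univ.filter (fun i => d i = 1), (n : ℤ)) +
        (∑ i ∈ Finset.univ.filter (fun i => d i < 1), ⌊((n : ℚ) + 1) * d i⌋) ≤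
        2 * (n : ℤ) := by
  by_contra hcon
  push_neg at hcon
  set F : Finset (Fin r) := Finset.univ.filter (fun i => d i < 1) with hFdef
  set E : Finset (Fin r) := Finset.univ.filter (fun i => d i = 1) with hEdef
  have hdF : ∀ i ∈ F, d i < 1 := fun i hi => (Finset.mem_filter.mp hi).2
  have hEsum : ∀ n : ℕ, (∑ _i ∈ E, (n:ℤ)) = (E.card : ℤ) * n := fun n => by
    rw [Finset.sum_const, nsmul_eq_mul]
  have f1 := hcon 1 (by norm_num)
  have f2 := hcon 2 (by norm_num)
  have f3 := hcon 3 (by norm_num)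
  have f4 := hcon 4 (by norm_num)
  have f6 := hcon 6 (by norm_num)
  simp only [show ((1:ℕ):ℚ) + 1 = 2 from by norm_num] at f1
  simp only [show ((2:ℕ):ℚ) + 1 = 3 from by norm_num] at f2
  simp only [show ((3:ℕ):ℚ) + 1 = 4 from by norm_num] at f3
  simp only [show ((4:ℕ):ℚ) + 1 = 5 from by norm_num] at f4
  simp only [show ((6:ℕ):ℚ) + 1 = 7 from by norm_num] at f6
  have t1 : (∑ i ∈ F, ⌊(2:ℚ) * d i⌋)
      = ∑ i ∈ F, (if 1/2 ≤ d i then (1:ℤ) else 0) :=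
    Finset.sum_congr rfl fun i hi => floorid2 _ (h0 i) (hdF i hi)
  have t2 : (∑ i ∈ F, ⌊(3:ℚ) * d i⌋)
      = (∑ i ∈ F, (if 1/3 ≤ d i then (1:ℤ) else 0))
        + (∑ i ∈ F, (if 2/3 ≤ d i then (1:ℤ) else 0)) := by
    rw [← Finset.sum_add_distrib]
    exact Finset.sum_congr rfl fun i hi => floorid3 _ (h0 i) (hdF i hi)
  have t3 : (∑ i ∈ F, ⌊(4:ℚ) * d i⌋)
      = (∑ i ∈ F, (if 1/4 ≤ d i then (1:ℤ) else 0))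
        + (∑ i ∈ F, (if 1/2 ≤ d i then (1:ℤ) else 0))
        + (∑ i ∈ F, (if 3/4 ≤ d i then (1:ℤ) else 0)) := by
    rw [← Finset.sum_add_distrib, ← Finset.sum_add_distrib]
    exact Finset.sum_congr rfl fun i hi => floorid4 _ (h0 i) (hdF i hi)
  have t4 : (∑ i ∈ F, ⌊(5:ℚ) * d i⌋)
      = (∑ i ∈ F, (if 1/5 ≤ d i then (1:ℤ) else 0))
        + (∑ i ∈ F, (if 2/5 ≤ d i then (1:ℤ) else 0))
        + (∑ i ∈ F, (if 3/5 ≤ d i then (1:ℤ) else 0))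
        + (∑ i ∈ F, (if 4/5 ≤ d i then (1:ℤ) else 0)) := by
    rw [← Finset.sum_add_distrib, ← Finset.sum_add_distrib, ← Finset.sum_add_distrib]
    exact Finset.sum_congr rfl fun i hi => floorid5 _ (h0 i) (hdF i hi)
  have t6 : (∑ i ∈ F, ⌊(7:ℚ) * d i⌋)
      = (∑ i ∈ F, (if 1/7 ≤ d i then (1:ℤ) else 0))
        + (∑ i ∈ F, (if 2/7 ≤ d i then (1:ℤ) else 0))
        + (∑ i ∈ F, (if 3/7 ≤ d i then (1:ℤ) else 0))
        + (∑ i ∈ F, (if 4/7 ≤ d i then (1:ℤ) else 0))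
        + (∑ i ∈ F, (if 5/7 ≤ d i then (1:ℤ) else 0))
        + (∑ i ∈ F, (if 6/7 ≤ d i then (1:ℤ) else 0)) := by
    rw [← Finset.sum_add_distrib, ← Finset.sum_add_distrib, ← Finset.sum_add_distrib,
      ← Finset.sum_add_distrib, ← Finset.sum_add_distrib]
    exact Finset.sum_congr rfl fun i hi => floorid7 _ (h0 i) (hdF i hi)
  rw [hEsum 1, t1] at f1
  rw [hEsum 2, t2] at f2
  rw [hEsum 3, t3] at f3
  rw [hEsum 4, t4] at f4
  rw [hEsum 6, t6] at f6
  -- cast failure inequalities to ℚ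
  have F1 := (Int.cast_le (R := ℚ)).mpr (Int.lt_iff_add_one_le.mp f1)
  have F2 := (Int.cast_le (R := ℚ)).mpr (Int.lt_iff_add_one_le.mp f2)
  have F3 := (Int.cast_le (R := ℚ)).mpr (Int.lt_iff_add_one_le.mp f3)
  have F4 := (Int.cast_le (R := ℚ)).mpr (Int.lt_iff_add_one_le.mp f4)
  have F6 := (Int.cast_le (R := ℚ)).mpr (Int.lt_iff_add_one_le.mp f6)
  push_cast [apply_ite (fun z : ℤ => (z : ℚ))] at F1 F2 F3 F4 F6
  -- chain (layer-cake) inequality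
  have hE1 : ((E.card : ℕ) : ℚ) = ∑ i ∈ E, d i := by
    have hd1 : ∀ i ∈ E, d i = 1 := fun i hi => (Finset.mem_filter.mp hi).2
    rw [Finset.sum_congr rfl hd1, Finset.sum_const, nsmul_eq_mul, mul_one]
  have hsplit : (∑ i ∈ E, d i) + (∑ i ∈ F, d i) ≤ 2 := by
    have hFne : F = Finset.univ.filter (fun i => ¬ (d i = 1)) := by
      rw [hFdef]
      exact Finset.filter_congr fun i _ =>
        ⟨fun h => ne_of_lt h, fun h => lt_of_le_of_ne (h1 i) h⟩
    have hun : (∑ i ∈ E, d i) + (∑ i ∈ F, d i) = ∑ i, d i := by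
      rw [hEdef, hFne, Finset.sum_filter_add_sum_filter_not]
    rw [hun]; exact hsum
  have hlay : 1/7 * (∑ i ∈ F, (if 1/7 ≤ d i then (1:ℚ) else 0))
      + 2/35 * (∑ i ∈ F, (if 1/5 ≤ d i then (1:ℚ) else 0))
      + 1/20 * (∑ i ∈ F, (if 1/4 ≤ d i then (1:ℚ) else 0))
      + 1/28 * (∑ i ∈ F, (if 2/7 ≤ d i then (1:ℚ) else 0))
      + 1/21 * (∑ i ∈ F, (if 1/3 ≤ d i then (1:ℚ) else 0))
      + 1/15 * (∑ i ∈ F, (if 2/5 ≤ d i then (1:ℚ) else 0))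
      + 1/35 * (∑ i ∈ F, (if 3/7 ≤ d i then (1:ℚ) else 0))
      + 1/14 * (∑ i ∈ F, (if 1/2 ≤ d i then (1:ℚ) else 0))
      + 1/14 * (∑ i ∈ F, (if 4/7 ≤ d i then (1:ℚ) else 0))
      + 1/35 * (∑ i ∈ F, (if 3/5 ≤ d i then (1:ℚ) else 0))
      + 1/15 * (∑ i ∈ F, (if 2/3 ≤ d i then (1:ℚ) else 0))
      + 1/21 * (∑ i ∈ F, (if 5/7 ≤ d i then (1:ℚ) else 0))
      + 1/28 * (∑ i ∈ F, (if 3/4 ≤ d i then (1:ℚ) else 0))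
      + 1/20 * (∑ i ∈ F, (if 4/5 ≤ d i then (1:ℚ) else 0))
      + 2/35 * (∑ i ∈ F, (if 6/7 ≤ d i then (1:ℚ) else 0))
      ≤ ∑ i ∈ F, d i := by
    simp only [Finset.mul_sum, ← Finset.sum_add_distrib]
    exact Finset.sum_le_sum fun i _ => layercake (d i) (h0 i)
  -- counting monotonicity and nonnegativity
  have monoQ : ∀ a b : ℚ, a ≤ b →
      (∑ i ∈ F, (if b ≤ d i then (1:ℚ) else 0))
        ≤ ∑ i ∈ F, (if a ≤ d i then (1:ℚ) else 0) := fun a b hab =>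
    Finset.sum_le_sum fun i _ => by
      by_cases hb : b ≤ d i
      · rw [if_pos hb, if_pos (hab.trans hb)]
      · rw [if_neg hb]
        split_ifs <;> norm_num
  have nnQ : ∀ t : ℚ, (0:ℚ) ≤ ∑ i ∈ F, (if t ≤ d i then (1:ℚ) else 0) := fun t =>
    Finset.sum_nonneg fun i _ => by split_ifs <;> norm_num
  have hEnn : (0:ℚ) ≤ ((E.card : ℕ) : ℚ) := Nat.cast_nonneg _
  have hChain := hsplit
  rw [← hE1] at hChain
  linarith [F1, F2, F3, F4, F6, hChain, hlay, hEnn,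
    nnQ (1/7), nnQ (1/5), nnQ (1/4), nnQ (2/7), nnQ (1/3), nnQ (2/5), nnQ (3/7),
    nnQ (1/2), nnQ (4/7), nnQ (3/5), nnQ (2/3), nnQ (5/7), nnQ (3/4), nnQ (4/5), nnQ (6/7),
    monoQ (1/7) (1/5) (by norm_num), monoQ (1/5) (1/4) (by norm_num),
    monoQ (1/4) (2/7) (by norm_num), monoQ (2/7) (1/3) (by norm_num),
    monoQ (1/3) (2/5) (by norm_num), monoQ (2/5) (3/7) (by norm_num),
    monoQ (3/7) (1/2) (by norm_num), monoQ (1/2) (4/7) (by norm_num),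
    monoQ (4/7) (3/5) (by norm_num), monoQ (3/5) (2/3) (by norm_num),
    monoQ (2/3) (5/7) (by norm_num), monoQ (5/7) (3/4) (by norm_num),
    monoQ (3/4) (4/5) (by norm_num), monoQ (4/5) (6/7) (by norm_num)]
end

section
/- Let d₁,…,d_r be rational numbers with 0 ≤ d_i ≤ 1 for all i and ∑_{i=1}^{r} d_i ≤ 2, and suppose d_i = 1 for at least one index i. Then there exists n ∈ {1, 2} such that (∑_{i : d_i = 1} n) + (∑_{i : d_i < 1} ⌊(n+1)·d_i⌋) ≤ 2n. -/
lemma floor_sum_eq_aux (q : ℚ) (hq0 : 0 ≤ q) (hq1 : q < 1)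
    (h : (5:ℚ) * q = (⌊(2:ℚ)*q⌋ : ℚ) + (⌊(3:ℚ)*q⌋ : ℚ)) : q = 0 := by
  have f2 : (⌊(2:ℚ)*q⌋ : ℚ) ≤ 2*q := Int.floor_le _
  have f3 : (⌊(3:ℚ)*q⌋ : ℚ) ≤ 3*q := Int.floor_le _
  have e2 : (⌊(2:ℚ)*q⌋ : ℚ) = 2*q := by linarith
  have e3 : (⌊(3:ℚ)*q⌋ : ℚ) = 3*q := by linarith
  have hcast : ((⌊(3:ℚ)*q⌋ - ⌊(2:ℚ)*q⌋ : ℤ) : ℚ) = q := by push_cast; linarith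
  have h0' : (0:ℤ) ≤ ⌊(3:ℚ)*q⌋ - ⌊(2:ℚ)*q⌋ := by
    have : (0:ℚ) ≤ ((⌊(3:ℚ)*q⌋ - ⌊(2:ℚ)*q⌋ : ℤ) : ℚ) := by rw [hcast]; exact hq0
    exact_mod_cast this
  have h1' : ⌊(3:ℚ)*q⌋ - ⌊(2:ℚ)*q⌋ < 1 := by
    have : ((⌊(3:ℚ)*q⌋ - ⌊(2:ℚ)*q⌋ : ℤ) : ℚ) < 1 := by rw [hcast]; exact hq1
    exact_mod_cast this
  have : ⌊(3:ℚ)*q⌋ - ⌊(2:ℚ)*q⌋ = 0 := by omega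
  rw [this] at hcast
  simpa using hcast.symm

/-- If the boundary on `ℙ¹` has a coefficient equal to `1`, then there is already a
`1`- or `2`-complement. -/
theorem exists_small_complement_P1 (r : ℕ) (d : Fin r → ℚ)
    (h0 : ∀ i, 0 ≤ d i) (h1 : ∀ i, d i ≤ 1) (hsum : ∑ i, d i ≤ 2)
    (hone : ∃ i, d i = 1) :
    ∃ n ∈ ({1, 2} : Set ℕ),
      (∑ i ∈ Finset.univ.filter (fun i => d i = 1), (n : ℤ)) +
        (∑ i ∈ Finset.univ.filter (fun i => d i < 1), ⌊((n : ℚ) + 1) * d i⌋) ≤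
        2 * (n : ℤ) := by
  by_contra hcon
  push_neg at hcon
  have hc1 := hcon 1 (by simp)
  have hc2 := hcon 2 (by simp)
  set A := Finset.univ.filter (fun i => d i = 1) with hA
  set B := Finset.univ.filter (fun i => d i < 1) with hB
  -- B is the complement filter of A
  have hBA : B = Finset.univ.filter (fun i => ¬ (d i = 1)) := by
    apply Finset.filter_congr
    intro i _
    constructor
    · intro h; exact fun he => absurd he (ne_of_lt h)
    · intro h; exact lt_of_le_of_ne (h1 i) h
  -- split the sum of d over univ
  have hsplit : ∑ i ∈ A, d i + ∑ i ∈ B, d i = ∑ i, d i := by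
    rw [hBA, hA]
    exact Finset.sum_filter_add_sum_filter_not _ _ _
  have hAd : ∑ i ∈ A, d i = (A.card : ℚ) := by
    rw [Finset.sum_congr rfl (fun i hi => (Finset.mem_filter.mp hi).2)]
    simp
    rfl
  set S := ∑ i ∈ B, d i with hSdef
  set k := (A.card : ℤ) with hk
  have hkS : (k : ℚ) + S ≤ 2 := by
    have : (A.card : ℚ) + S = ∑ i, d i := by rw [← hAd, hsplit]
    push_cast
    rw [hk]; push_cast
    linarith [this ▸ hsum]
  have hS0 : 0 ≤ S := Finset.sum_nonneg fun i _ => h0 i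
  have hk1 : 1 ≤ k := by
    obtain ⟨i, hi⟩ := hone
    have : i ∈ A := Finset.mem_filter.mpr ⟨Finset.mem_univ i, hi⟩
    have hcp := Finset.card_pos.mpr ⟨i, this⟩
    rw [hk]
    exact_mod_cast hcp
  set F2 := ∑ i ∈ B, ⌊(2:ℚ) * d i⌋ with hF2
  set F3 := ∑ i ∈ B, ⌊(3:ℚ) * d i⌋ with hF3
  have hc1' : 3 ≤ k + F2 := by
    have eB : ∑ i ∈ B, ⌊(((1:ℕ):ℚ) + 1) * d i⌋ = F2 :=
      Finset.sum_congr rfl (fun i _ => by norm_num)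
    have eA : ∑ _i ∈ A, ((1:ℕ):ℤ) = k := by simp [hk]
    rw [eA, eB] at hc1
    omega
  have hc2' : 5 ≤ 2 * k + F3 := by
    have eB : ∑ i ∈ B, ⌊(((2:ℕ):ℚ) + 1) * d i⌋ = F3 :=
      Finset.sum_congr rfl (fun i _ => by norm_num)
    have eA : ∑ _i ∈ A, ((2:ℕ):ℤ) = 2 * k := by
      simp [hk, Finset.sum_const, mul_comm]
    rw [eA, eB] at hc2
    omega
  -- floor bounds
  have hF2le : (F2 : ℚ) ≤ 2 * S := by
    rw [hF2, hSdef]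
    push_cast
    rw [Finset.mul_sum]
    exact Finset.sum_le_sum fun i _ => Int.floor_le _
  have hF3le : (F3 : ℚ) ≤ 3 * S := by
    rw [hF3, hSdef]
    push_cast
    rw [Finset.mul_sum]
    exact Finset.sum_le_sum fun i _ => Int.floor_le _
  -- derive k = 1 and S = 1
  have hkQ1 : (1:ℚ) ≤ (k:ℚ) := by exact_mod_cast hk1
  have hq1 : (3:ℚ) ≤ (k:ℚ) + (F2:ℚ) := by exact_mod_cast hc1'
  have hq2 : (5:ℚ) ≤ 2*(k:ℚ) + (F3:ℚ) := by exact_mod_cast hc2'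
  have hkle : (k:ℚ) ≤ 1 := by linarith
  have hkeq : (k:ℚ) = 1 := le_antisymm hkle hkQ1
  have hSeq : S = 1 := by nlinarith
  -- equality forces each term to vanish
  have hsum5 : ∑ i ∈ B, ((5:ℚ) * d i - (⌊(2:ℚ)*d i⌋ : ℚ) - (⌊(3:ℚ)*d i⌋ : ℚ)) = 0 := by
    have hle : ∑ i ∈ B, ((5:ℚ) * d i - (⌊(2:ℚ)*d i⌋ : ℚ) - (⌊(3:ℚ)*d i⌋ : ℚ)) ≤ 0 := by
      have : ∑ i ∈ B, ((5:ℚ) * d i - (⌊(2:ℚ)*d i⌋ : ℚ) - (⌊(3:ℚ)*d i⌋ : ℚ))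
          = 5 * S - (F2:ℚ) - (F3:ℚ) := by
        rw [Finset.sum_sub_distrib, Finset.sum_sub_distrib, hSdef, hF2, hF3]
        push_cast
        rw [Finset.mul_sum]
      rw [this]
      linarith
    have hge : 0 ≤ ∑ i ∈ B, ((5:ℚ) * d i - (⌊(2:ℚ)*d i⌋ : ℚ) - (⌊(3:ℚ)*d i⌋ : ℚ)) := by
      apply Finset.sum_nonneg
      intro i hi
      have h5 : (⌊(5:ℚ)*d i⌋ : ℚ) ≤ 5 * d i := Int.floor_le _
      have f2 : (⌊(2:ℚ)*d i⌋ : ℚ) ≤ 2 * d i := Int.floor_le _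
      have f3 : (⌊(3:ℚ)*d i⌋ : ℚ) ≤ 3 * d i := Int.floor_le _
      linarith
    linarith
  have hzero : ∀ i ∈ B, d i = 0 := by
    intro i hi
    have hterm : (5:ℚ) * d i - (⌊(2:ℚ)*d i⌋ : ℚ) - (⌊(3:ℚ)*d i⌋ : ℚ) = 0 := by
      have := (Finset.sum_eq_zero_iff_of_nonneg (fun j hj => by
        have f2 : (⌊(2:ℚ)*d j⌋ : ℚ) ≤ 2 * d j := Int.floor_le _
        have f3 : (⌊(3:ℚ)*d j⌋ : ℚ) ≤ 3 * d j := Int.floor_le _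
        linarith)).mp hsum5
      exact this i hi
    exact floor_sum_eq_aux (d i) (h0 i) (Finset.mem_filter.mp hi).2 (by linarith)
  have : S = 0 := by
    rw [hSdef]
    exact Finset.sum_eq_zero hzero
  rw [this] at hSeq
  norm_num at hSeq
end

section
/- Let m be a positive integer, let s ≥ 0, and for j = 1,…,s let k_j be a nonnegative integer and r_j a positive integer. Set α := (m - 1 + ∑_{j=1}^{s} k_j·(1 - 1/r_j)) / m. If α ≤ 1, then either α = 1 or there exists a positive integer N with α = 1 - 1/N. -/
/-- Standard coefficients are preserved under adjunction: a coefficient of the form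
`(m - 1 + ∑ k_j (1 - 1/r_j)) / m` that is `≤ 1` is equal to `1` or to `1 - 1/N`
for some positive integer `N`. -/
theorem different_coeff_standard (m : ℕ) (hm : 0 < m) (s : ℕ)
    (k : Fin s → ℕ) (r : Fin s → ℕ) (hr : ∀ j, 0 < r j) (α : ℚ)
    (hα : α = ((m : ℚ) - 1 + ∑ j, (k j : ℚ) * (1 - 1 / (r j : ℚ))) / (m : ℚ))
    (hle : α ≤ 1) :
    α = 1 ∨ ∃ N : ℕ, 0 < N ∧ α = 1 - 1 / (N : ℚ) := by
  have hmQ : (0:ℚ) < (m:ℚ) := by exact_mod_cast hm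
  set t : Fin s → ℚ := fun j => (k j : ℚ) * (1 - 1 / (r j : ℚ)) with ht_def
  have ht0 : ∀ j, 0 ≤ t j := by
    intro j
    have h1 : (1:ℚ) ≤ (r j : ℚ) := by exact_mod_cast hr j
    have h2 : 1 / (r j : ℚ) ≤ 1 := by
      rw [div_le_one (by linarith)]; exact h1
    have : (0:ℚ) ≤ (k j : ℚ) := by positivity
    simp only [ht_def]
    nlinarith
  have hhalf : ∀ j, t j ≠ 0 → 1/2 ≤ t j := by
    intro j hj
    have hk : k j ≠ 0 := by
      intro h; apply hj; simp [ht_def, h]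
    have hrj : r j ≠ 1 := by
      intro h; apply hj; simp [ht_def, h]
    have hk1 : (1:ℚ) ≤ (k j : ℚ) := by
      exact_mod_cast Nat.one_le_iff_ne_zero.mpr hk
    have hr2 : (2:ℚ) ≤ (r j : ℚ) := by
      have := hr j; have : 2 ≤ r j := by omega
      exact_mod_cast this
    have hrpos : (0:ℚ) < (r j : ℚ) := by linarith
    have : 1 / (r j : ℚ) ≤ 1/2 := by
      rw [div_le_div_iff₀ hrpos (by norm_num)]; linarith
    simp only [ht_def]
    nlinarith
  set T : ℚ := ∑ j, t j with hT_def
  have hα' : α = ((m : ℚ) - 1 + T) / m := hα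
  rcases le_or_gt 1 T with hT1 | hT1
  · left
    have h1 : 1 ≤ α := by
      rw [hα', le_div_iff₀ hmQ]; linarith
    linarith
  · right
    by_cases hz : ∀ j, t j = 0
    · refine ⟨m, hm, ?_⟩
      have hT : T = 0 := Finset.sum_eq_zero (fun j _ => hz j)
      rw [hα', hT]
      field_simp
      ring
    · push_neg at hz
      obtain ⟨j₀, hj₀⟩ := hz
      have hrest : ∀ j ∈ Finset.univ.erase j₀, t j = 0 := by
        intro j hj
        by_contra h
        have h1 : 1/2 ≤ t j := hhalf j h
        have h2 : 1/2 ≤ t j₀ := hhalf j₀ hj₀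
        have hsum : T = t j₀ + ∑ x ∈ Finset.univ.erase j₀, t x :=
          (Finset.add_sum_erase _ _ (Finset.mem_univ j₀)).symm
        have h3 : t j ≤ ∑ x ∈ Finset.univ.erase j₀, t x :=
          Finset.single_le_sum (fun i _ => ht0 i) hj
        linarith
      have hTj : T = t j₀ := by
        rw [hT_def, ← Finset.add_sum_erase _ _ (Finset.mem_univ j₀),
          Finset.sum_eq_zero hrest, add_zero]
      have hk : k j₀ ≠ 0 := by
        intro h; apply hj₀; simp [ht_def, h]
      have hrj : r j₀ ≠ 1 := by
        intro h; apply hj₀; simp [ht_def, h]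
      have hr2 : (2:ℚ) ≤ (r j₀ : ℚ) := by
        have := hr j₀; have : 2 ≤ r j₀ := by omega
        exact_mod_cast this
      have hrpos : (0:ℚ) < (r j₀ : ℚ) := by linarith
      have hk1 : k j₀ = 1 := by
        by_contra h
        have hk2 : (2:ℚ) ≤ (k j₀ : ℚ) := by
          have : 2 ≤ k j₀ := by omega
          exact_mod_cast this
        have : 1 / (r j₀ : ℚ) ≤ 1/2 := by
          rw [div_le_div_iff₀ hrpos (by norm_num)]; linarith
        have : (1:ℚ) ≤ t j₀ := by
          simp only [ht_def]; nlinarith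
        linarith [hTj ▸ hT1]
      have hTv : T = 1 - 1 / (r j₀ : ℚ) := by
        rw [hTj]; simp [ht_def, hk1]
      refine ⟨m * r j₀, Nat.mul_pos hm (hr j₀), ?_⟩
      rw [hα', hTv]
      push_cast
      field_simp
      ring
end

section
/- Let n ≥ 1, let b₁,…,b_n be integers with b_i ≥ 2 for all i, and let a₁,…,a_n be real numbers satisfying, with the convention a₀ = a_{n+1} = 0, the system b_i - 2 = a_{i-1} - b_i·a_i + a_{i+1} for i = 1,…,n. Then: (1) ∑_{i=1}^{n} (b_i - 2)·(a_i + 1) = -a₁ - a_n; and (2) if ε > 0 and a_i > -1 + ε for all i, then 2 + ∑_{i=1}^{n} (b_i - 2) < 2/ε. -/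
/-- Bounding the multiplicity of an `ε`-log terminal `A_n` singularity: for the
tridiagonal discrepancy system `b_i - 2 = a_{i-1} - b_i a_i + a_{i+1}` (`a₀ = a_{n+1} = 0`)
one has `∑ (b_i - 2)(a_i + 1) = -a₁ - a_n`, and if `a_i > -1 + ε` for all `i` then
`2 + ∑ (b_i - 2) < 2/ε`. -/
theorem An_multiplicity_bound (n : ℕ) (hn : 1 ≤ n) (b : ℕ → ℤ) (a : ℕ → ℝ)
    (hb : ∀ i, 1 ≤ i → i ≤ n → 2 ≤ b i)
    (ha0 : a 0 = 0) (han : a (n + 1) = 0)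
    (hsys : ∀ i, 1 ≤ i → i ≤ n →
      (b i : ℝ) - 2 = a (i - 1) - (b i : ℝ) * a i + a (i + 1)) :
    (∑ i ∈ Finset.Icc 1 n, ((b i : ℝ) - 2) * (a i + 1) = -a 1 - a n) ∧
    (∀ ε : ℝ, 0 < ε → (∀ i, 1 ≤ i → i ≤ n → a i > -1 + ε) →
      2 + ∑ i ∈ Finset.Icc 1 n, ((b i : ℝ) - 2) < 2 / ε) := by
  have key : ∑ i ∈ Finset.Icc 1 n, ((b i : ℝ) - 2) * (a i + 1) = -a 1 - a n := by
    have h1 : ∀ i ∈ Finset.Icc 1 n, ((b i : ℝ) - 2) * (a i + 1)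
        = (a (i + 1) - a i) - (a i - a (i - 1)) := by
      intro i hi
      simp only [Finset.mem_Icc] at hi
      linear_combination hsys i hi.1 hi.2
    rw [Finset.sum_congr rfl h1]
    have hIcc : Finset.Icc 1 n = Finset.Ico 1 (n + 1) := by
      ext x; simp [Nat.lt_succ_iff]
    rw [hIcc, Finset.sum_Ico_eq_sum_range]
    simp only [Nat.add_sub_cancel]
    have h2 : ∀ j ∈ Finset.range n,
        (a (1 + j + 1) - a (1 + j)) - (a (1 + j) - a (1 + j - 1))
        = (fun k => a (k + 1) - a k) (j + 1) - (fun k => a (k + 1) - a k) j := by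
      intro j _
      have e1 : 1 + j + 1 = j + 1 + 1 := by omega
      have e2 : 1 + j = j + 1 := by omega
      have e3 : j + 1 - 1 = j := by omega
      rw [e1, e2, e3]
    rw [Finset.sum_congr rfl h2, Finset.sum_range_sub (fun k => a (k + 1) - a k)]
    rw [ha0, han]
    ring
  refine ⟨key, ?_⟩
  intro ε hε ha
  have hterm : ∀ i ∈ Finset.Icc 1 n, ((b i : ℝ) - 2) * ε ≤ ((b i : ℝ) - 2) * (a i + 1) := by
    intro i hi
    simp only [Finset.mem_Icc] at hi
    have hbi : (0 : ℝ) ≤ (b i : ℝ) - 2 := by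
      have := hb i hi.1 hi.2
      linarith [(by exact_mod_cast this : (2 : ℝ) ≤ (b i : ℝ))]
    have hai : ε ≤ a i + 1 := by linarith [ha i hi.1 hi.2]
    exact mul_le_mul_of_nonneg_left hai hbi
  have hsum : (∑ i ∈ Finset.Icc 1 n, ((b i : ℝ) - 2)) * ε
      ≤ ∑ i ∈ Finset.Icc 1 n, ((b i : ℝ) - 2) * (a i + 1) := by
    rw [Finset.sum_mul]
    exact Finset.sum_le_sum hterm
  have h1 : a 1 > -1 + ε := ha 1 le_rfl hn
  have hnn : a n > -1 + ε := ha n hn le_rfl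
  rw [lt_div_iff₀ hε]
  nlinarith [hsum, key]
end

section
/- Let c be a rational number with 2/3 < c < 1. Suppose there exist an integer s ≥ 1, positive integers n₁,…,n_s, an integer q ≥ 0, and integers r₁,…,r_q with r_j ≥ 2, such that ∑_{i=1}^{s} (n_i - 1 + c)/n_i + ∑_{j=1}^{q} (r_j - 1)/r_j = 2. Then c ∈ {7/10, 3/4, 5/6}. -/
set_option maxHeartbeats 2000000 in
/-- Log canonical thresholds of reduced divisors on klt surface germs lying in
`(2/3, 1)` belong to `{7/10, 3/4, 5/6}`. -/
theorem lc_threshold_values (c : ℚ) (hc1 : 2 / 3 < c) (hc2 : c < 1)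
    (h : ∃ s : ℕ, 1 ≤ s ∧ ∃ nn : Fin s → ℕ, (∀ i, 0 < nn i) ∧
      ∃ (q : ℕ) (rr : Fin q → ℕ), (∀ j, 2 ≤ rr j) ∧
        (∑ i, ((nn i : ℚ) - 1 + c) / (nn i : ℚ)) +
          (∑ j, ((rr j : ℚ) - 1) / (rr j : ℚ)) = 2) :
    c = 7 / 10 ∨ c = 3 / 4 ∨ c = 5 / 6 := by
  obtain ⟨s, hs, nn, hnn, q, rr, hrr, heq⟩ := h
  have hnQ : ∀ i, (1:ℚ) ≤ (nn i : ℚ) := fun i => by exact_mod_cast hnn i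
  have hrQ : ∀ j, (2:ℚ) ≤ (rr j : ℚ) := fun j => by exact_mod_cast hrr j
  have hA : ∀ i, c ≤ ((nn i : ℚ) - 1 + c) / (nn i : ℚ) := by
    intro i
    rw [le_div_iff₀ (by linarith [hnQ i])]
    nlinarith [hnQ i]
  have hA' : ∀ i, ((nn i : ℚ) - 1 + c) / (nn i : ℚ) < 1 := by
    intro i
    rw [div_lt_one (by linarith [hnQ i])]
    linarith
  have hB : ∀ j, (1:ℚ)/2 ≤ ((rr j : ℚ) - 1) / (rr j : ℚ) := by
    intro j
    rw [le_div_iff₀ (by linarith [hrQ j])]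
    nlinarith [hrQ j]
  have hB' : ∀ j, ((rr j : ℚ) - 1) / (rr j : ℚ) < 1 := by
    intro j
    rw [div_lt_one (by linarith [hrQ j])]
    linarith
  -- sum bounds
  have hS1 : (s:ℚ) * c ≤ ∑ i, ((nn i : ℚ) - 1 + c) / (nn i : ℚ) := by
    have := Finset.card_nsmul_le_sum Finset.univ
      (fun i => ((nn i : ℚ) - 1 + c) / (nn i : ℚ)) c (fun i _ => hA i)
    simpa [nsmul_eq_mul] using this
  have hS2 : (∑ i, ((nn i : ℚ) - 1 + c) / (nn i : ℚ)) < (s:ℚ) := by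
    have hne : (Finset.univ : Finset (Fin s)).Nonempty := by
      have : NeZero s := ⟨by omega⟩
      exact Finset.univ_nonempty
    have := Finset.sum_lt_sum_of_nonempty hne (g := fun _ => (1:ℚ)) (fun i _ => hA' i)
    simpa using this
  have hT1 : (q:ℚ) * (1/2) ≤ ∑ j, ((rr j : ℚ) - 1) / (rr j : ℚ) := by
    have := Finset.card_nsmul_le_sum Finset.univ
      (fun j => ((rr j : ℚ) - 1) / (rr j : ℚ)) (1/2) (fun j _ => hB j)
    simpa [nsmul_eq_mul] using this
  have hT2 : (∑ j, ((rr j : ℚ) - 1) / (rr j : ℚ)) ≤ (q:ℚ) := by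
    have := Finset.sum_le_card_nsmul Finset.univ
      (fun j => ((rr j : ℚ) - 1) / (rr j : ℚ)) 1 (fun j _ => le_of_lt (hB' j))
    simpa using this
  -- pin down s and q
  have hsq1 : 2 < s + q := by
    have : (2:ℚ) < (s:ℚ) + (q:ℚ) := by linarith
    exact_mod_cast this
  have hs2 : s ≤ 2 := by
    by_contra h'
    push_neg at h'
    have h3 : (3:ℚ) ≤ (s:ℚ) := by exact_mod_cast h'
    nlinarith
  have hq2 : q ≤ 2 := by
    by_contra h'
    push_neg at h'
    have h3 : (3:ℚ) ≤ (q:ℚ) := by exact_mod_cast h'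
    have hsQ : (1:ℚ) ≤ (s:ℚ) := by exact_mod_cast hs
    have hcs : c ≤ (s:ℚ) * c := le_mul_of_one_le_left (by linarith) hsQ
    linarith
  have hqs : ¬ (s = 2 ∧ q = 2) := by
    rintro ⟨rfl, rfl⟩
    push_cast at hS1 hT1
    nlinarith
  have hcase : (s = 1 ∧ q = 2) ∨ (s = 2 ∧ q = 1) := by omega
  rcases hcase with ⟨rfl, rfl⟩ | ⟨rfl, rfl⟩
  · -- s = 1, q = 2
    rw [Fin.sum_univ_one] at heq
    rw [Fin.sum_univ_two] at heq
    set n := nn 0 with hn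
    set r₁ := rr 0 with hr1
    set r₂ := rr 1 with hr2
    have hn1 : (1:ℚ) ≤ (n:ℚ) := hnQ 0
    have hn0 : (0:ℚ) < (n:ℚ) := by linarith
    have hr1Q : (2:ℚ) ≤ (r₁:ℚ) := hrQ 0
    have hr2Q : (2:ℚ) ≤ (r₂:ℚ) := hrQ 1
    -- bound r₁, r₂ ≤ 5
    have hb1 : ∀ j, ((6:ℚ) ≤ (rr j : ℚ)) → (5:ℚ)/6 ≤ ((rr j : ℚ) - 1) / (rr j : ℚ) := by
      intro j hj
      rw [le_div_iff₀ (by linarith)]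
      linarith
    have hr1le : r₁ ≤ 5 := by
      by_contra h'
      push_neg at h'
      have h6 : (6:ℚ) ≤ (r₁:ℚ) := by exact_mod_cast h'
      have := hb1 0 h6
      have := hB 1
      have := hA 0
      simp only [← hn, ← hr1, ← hr2] at *
      linarith
    have hr2le : r₂ ≤ 5 := by
      by_contra h'
      push_neg at h'
      have h6 : (6:ℚ) ≤ (r₂:ℚ) := by exact_mod_cast h'
      have := hb1 1 h6
      have := hB 0
      have := hA 0
      simp only [← hn, ← hr1, ← hr2] at *
      linarith
    have hr1ge : 2 ≤ r₁ := hrr 0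
    have hr2ge : 2 ≤ r₂ := hrr 1
    have key : (n:ℚ) - 1 + c = (2 - ((r₁:ℚ) - 1)/(r₁:ℚ) - ((r₂:ℚ) - 1)/(r₂:ℚ)) * (n:ℚ) := by
      rw [← div_eq_iff (ne_of_gt hn0)]
      linarith [heq]
    clear heq hS1 hS2 hT1 hT2
    interval_cases r₁ <;> interval_cases r₂ <;> norm_num at key <;>
      first
        | (exfalso; nlinarith)
        | (have hnlt : n < 2 := by
             have : (n:ℚ) < 2 := by nlinarith
             exact_mod_cast this
           interval_cases n <;> norm_num at key <;>
             first
               | (exfalso; linarith)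
               | (left; linarith)
               | (right; left; linarith)
               | (right; right; linarith))
  · -- s = 2, q = 1
    rw [Fin.sum_univ_two] at heq
    rw [Fin.sum_univ_one] at heq
    set n₁ := nn 0 with hn1d
    set n₂ := nn 1 with hn2d
    set r := rr 0 with hrd
    have h1 : (1:ℚ) ≤ (n₁:ℚ) := hnQ 0
    have h2 : (1:ℚ) ≤ (n₂:ℚ) := hnQ 1
    have hr : (2:ℚ) ≤ (r:ℚ) := hrQ 0
    -- both n₁, n₂ = 1
    have hbig : ∀ i, ((2:ℚ) ≤ (nn i : ℚ)) → (1 + c)/2 ≤ ((nn i : ℚ) - 1 + c) / (nn i : ℚ) := by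
      intro i hi
      rw [div_le_div_iff₀ (by norm_num) (by linarith)]
      nlinarith
    have hp1 : 0 < n₁ := hnn 0
    have hp2 : 0 < n₂ := hnn 1
    have hpr : 2 ≤ r := hrr 0
    have hn1e : n₁ = 1 := by
      by_contra h'
      have h2' : (2:ℚ) ≤ (n₁:ℚ) := by
        have : 2 ≤ n₁ := by omega
        exact_mod_cast this
      have := hbig 0 h2'
      have := hA 1
      have := hB 0
      simp only [← hn1d, ← hn2d, ← hrd] at *
      linarith
    have hn2e : n₂ = 1 := by
      by_contra h'
      have h2' : (2:ℚ) ≤ (n₂:ℚ) := by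
        have : 2 ≤ n₂ := by omega
        exact_mod_cast this
      have := hbig 1 h2'
      have := hA 0
      have := hB 0
      simp only [← hn1d, ← hn2d, ← hrd] at *
      linarith
    rw [hn1e, hn2e] at heq
    norm_num at heq
    -- heq : c + c + (r-1)/r = 2
    have hr0 : (0:ℚ) < (r:ℚ) := by linarith
    have key : (r:ℚ) - 1 = (2 - c - c) * (r:ℚ) := by
      rw [← div_eq_iff (ne_of_gt hr0)]
      linarith [heq]
    have hrlt : r < 3 := by
      have : (r:ℚ) < 3 := by nlinarith
      exact_mod_cast this
    have hre : r = 2 := by omega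
    rw [hre] at key
    norm_num at key
    right; left; linarith
end
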